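/- Let P ≥ 1, let f_1, …, f_P ∈ ℝ satisfy f_i − f_j ∉ ℤ for all i ≠ j, and let α_1, …, α_P ∈ ℂ. For each M ≥ 1 define the channel vector h_M = Σ_{p=1}^{P} α_p · a_M(f_p) ∈ ℂ^M. Then ‖h_M‖² / M → Σ_{p=1}^{P} |α_p|² as M → ∞. -/

import Mathlib

/-!
Expanding the square, `‖h_M‖² = Σ_{q,p} conj α_q α_p ⟪a_M(f_q), a_M(f_p)⟫`, and each inner product
is the geometric sum `Σ_{m<M} wᵐ` with `w = e^{2πi(f_q − f_p)}`. On the diagonal `w = 1` and the sum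
is `M`; off the diagonal `w` is a unimodular number different from `1` (as `f_q − f_p ∉ ℤ`), so the
sum stays bounded by `2 / |w − 1|` and disappears after division by `M`.
-/

open scoped Real

/-- The steering vector `a_M(f) ∈ ℂ^M`, whose `m`-th entry is `e^{-2πi m f}`. -/
noncomputable def steer (M : ℕ) (f : ℝ) : EuclideanSpace ℂ (Fin M) :=
  WithLp.toLp 2 fun m => Complex.exp (-(2 * (π : ℂ) * Complex.I * ((m : ℕ) : ℂ) * (f : ℂ)))

open scoped ComplexConjugate
open Finset Filter Topology Complex

lemma tendsto_geom_sum_div_nat_of_ne_one {𝕜 : Type*} [RCLike 𝕜] {w : 𝕜} (hw : ‖w‖ ≤ 1)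
    (hw1 : w ≠ 1) :
    Tendsto (fun M : ℕ => (∑ m ∈ range M, w ^ m) / M) atTop (𝓝 0) := by
  have hbound (M : ℕ) : ‖∑ m ∈ range M, w ^ m‖ ≤ 2 / ‖w - 1‖ := by
    rw [geom_sum_eq hw1, norm_div]
    gcongr
    calc ‖w ^ M - 1‖ ≤ ‖w ^ M‖ + ‖(1 : 𝕜)‖ := norm_sub_le _ _
      _ ≤ 1 + 1 := by rw [norm_pow, norm_one]; gcongr; exact pow_le_one₀ (norm_nonneg w) hw
      _ = 2 := by norm_num
  refine squeeze_zero_norm (fun M => ?_) (tendsto_const_div_atTop_nhds_zero_nat (2 / ‖w - 1‖))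
  rw [norm_div, RCLike.norm_natCast]
  gcongr
  exact hbound M

lemma tendsto_geom_sum_div_nat {𝕜 : Type*} [RCLike 𝕜] {w : 𝕜} (hw : ‖w‖ ≤ 1) :
    Tendsto (fun M : ℕ => (∑ m ∈ range M, w ^ m) / M) atTop (𝓝 (if w = 1 then 1 else 0)) := by
  split_ifs with hw1
  · refine tendsto_const_nhds.congr' ?_
    filter_upwards [eventually_ne_atTop 0] with M hM
    simp [hw1, hM]
  · exact tendsto_geom_sum_div_nat_of_ne_one hw hw1

lemma ofReal_norm_sum_smul_sq {𝕜 E ι : Type*} [RCLike 𝕜] [NormedAddCommGroup E]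
    [InnerProductSpace 𝕜 E] (s : Finset ι) (c : ι → 𝕜) (v : ι → E) :
    ((‖∑ i ∈ s, c i • v i‖ ^ 2 : ℝ) : 𝕜) =
      ∑ i ∈ s, ∑ j ∈ s, conj (c i) * c j * inner 𝕜 (v i) (v j) := by
  rw [RCLike.ofReal_pow, ← inner_self_eq_norm_sq_to_K, sum_inner]
  refine sum_congr rfl fun i _ => ?_
  rw [inner_sum]
  refine sum_congr rfl fun j _ => ?_
  rw [inner_smul_left, inner_smul_right, mul_assoc]

lemma norm_cexp_two_pi_I_mul_ofReal (x : ℝ) : ‖cexp (2 * π * I * x)‖ = 1 := by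
  rw [Complex.norm_exp]; simp

lemma cexp_two_pi_I_mul_ofReal_eq_one_iff (x : ℝ) :
    cexp (2 * π * I * x) = 1 ↔ ∃ k : ℤ, x = k := by
  rw [Complex.exp_eq_one_iff]
  have h : (2 * π * I : ℂ) ≠ 0 := by simp [Real.pi_ne_zero]
  refine exists_congr fun k => ?_
  rw [mul_comm (k : ℂ), mul_right_inj' h]
  exact_mod_cast Iff.rfl

lemma inner_steer (M : ℕ) (g h : ℝ) :
    inner ℂ (steer M g) (steer M h) = ∑ m ∈ range M, cexp (2 * π * I * (g - h : ℝ)) ^ m := by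
  rw [PiLp.inner_apply, ← Fin.sum_univ_eq_sum_range]
  refine sum_congr rfl fun m _ => ?_
  simp only [steer, PiLp.toLp_apply, RCLike.inner_apply]
  rw [← Complex.exp_conj, ← Complex.exp_nat_mul, ← Complex.exp_add]
  congr 1
  simp only [map_neg, map_mul, Complex.conj_I, Complex.conj_ofReal, Complex.conj_natCast,
    map_ofNat]
  push_cast
  ring

theorem stmt4_general (P : ℕ) (f : Fin P → ℝ)
    (hf : ∀ i j : Fin P, i ≠ j → ∀ k : ℤ, f i - f j ≠ (k : ℝ))
    (α : Fin P → ℂ) :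
    Filter.Tendsto
      (fun M : ℕ => ‖∑ p, α p • steer M (f p)‖ ^ 2 / (M : ℝ))
      Filter.atTop (nhds (∑ p, ‖α p‖ ^ 2)) := by
  have hdiag (q p : Fin P) : cexp (2 * π * I * (f q - f p : ℝ)) = 1 ↔ q = p := by
    rw [cexp_two_pi_I_mul_ofReal_eq_one_iff]
    refine ⟨fun ⟨k, hk⟩ => by_contra fun hqp => hf q p hqp k hk, ?_⟩
    rintro rfl
    exact ⟨0, by simp⟩
  have hlim : Tendsto (fun M : ℕ => ∑ q, ∑ p, conj (α q) * α p *
      ((∑ m ∈ range M, cexp (2 * π * I * (f q - f p : ℝ)) ^ m) / M)) atTop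
      (𝓝 (∑ q, ∑ p, conj (α q) * α p * if q = p then 1 else 0)) :=
    tendsto_finsetSum _ fun q _ => tendsto_finsetSum _ fun p _ => by
      rw [← if_congr (hdiag q p) rfl rfl]
      exact (tendsto_geom_sum_div_nat (norm_cexp_two_pi_I_mul_ofReal _).le).const_mul _
  rw [← tendsto_ofReal_iff]
  convert hlim using 2 with M
  · rw [ofReal_div, ofReal_natCast, ← RCLike.ofReal_eq_complex_ofReal, ofReal_norm_sum_smul_sq,
      RCLike.ofReal_eq_complex_ofReal]
    simp only [inner_steer, sum_div, mul_div_assoc]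
  · simp [Complex.conj_mul']

/-- for `P ≥ 1`, frequencies `f_1, …, f_P` with `f_i − f_j ∉ ℤ` for `i ≠ j`,
and gains `α_1, …, α_P ∈ ℂ`, the channel `h_M = Σ_p α_p a_M(f_p)` satisfies
`‖h_M‖² / M → Σ_p |α_p|²` as `M → ∞`. -/
theorem stmt4 (P : ℕ) (hP : 1 ≤ P) (f : Fin P → ℝ)
    (hf : ∀ i j : Fin P, i ≠ j → ∀ k : ℤ, f i - f j ≠ (k : ℝ))
    (α : Fin P → ℂ) :
    Filter.Tendsto
      (fun M : ℕ => ‖∑ p, α p • steer M (f p)‖ ^ 2 / (M : ℝ))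
      Filter.atTop (nhds (∑ p, ‖α p‖ ^ 2)) :=
  stmt4_general P f hf α
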